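/- Let (A, μ, Δ) be an infinitesimal bialgebra with symmetric bibalanceator, and define δ_a(x) = (1⊗a)Δ(x) − τ((1⊗a)Δ(x)), ζ^a(x) = Δ(x)(a⊗1) − τ(Δ(x)(a⊗1)), T_1(u⊗v) = (1⊗u)Δ(v), T_2(u⊗v) = Δ(u)(v⊗1). Then the generalized coJacobi identity holds: (Id+σ+σ²)(ζ^b ⊗ Id)(T_1(a⊗x)) = (Id+σ+σ²)(δ_a ⊗ Id)(τ(T_2(x⊗b))) for all a, b, x ∈ A. -/
import Mathlib
set_option synthInstance.maxHeartbeats 1000000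
set_option maxHeartbeats 1000000


open scoped TensorProduct

variable {k : Type*} [Field k] {A : Type*} [Ring A] [Algebra k A]

/-- The flip `τ` of `A ⊗ A`. -/
noncomputable def flipT (k : Type*) [Field k] (A : Type*) [Ring A] [Algebra k A] :
    A ⊗[k] A →ₗ[k] A ⊗[k] A :=
  (TensorProduct.comm k A A).toLinearMap

/-- The cyclic permutation `σ` of `A ⊗ A ⊗ A`, `x ⊗ y ⊗ z ↦ z ⊗ x ⊗ y`. -/
noncomputable def cycT (k : Type*) [Field k] (A : Type*) [Ring A] [Algebra k A] :
    A ⊗[k] (A ⊗[k] A) →ₗ[k] A ⊗[k] (A ⊗[k] A) :=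
  (TensorProduct.comm k (A ⊗[k] A) A).toLinearMap.comp
    (TensorProduct.assoc k A A A).symm.toLinearMap

/-- `Id + σ + σ²`. -/
noncomputable def cyclicSum (k : Type*) [Field k] (A : Type*) [Ring A] [Algebra k A] :
    A ⊗[k] (A ⊗[k] A) →ₗ[k] A ⊗[k] (A ⊗[k] A) :=
  LinearMap.id + cycT k A + (cycT k A).comp (cycT k A)

/-- `(φ ⊗ Id)` followed by the associator, as a map `A ⊗ A → A ⊗ (A ⊗ A)`. -/
noncomputable def applyFirst (φ : A →ₗ[k] A ⊗[k] A) :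
    A ⊗[k] A →ₗ[k] A ⊗[k] (A ⊗[k] A) :=
  (TensorProduct.assoc k A A A).toLinearMap.comp (TensorProduct.map φ LinearMap.id)

/-- `δ_a = x ↦ (1 ⊗ a)Δ(x) − τ((1 ⊗ a)Δ(x))` as a linear map. -/
noncomputable def overCobracketL (Δ : A →ₗ[k] A ⊗[k] A) (a : A) : A →ₗ[k] A ⊗[k] A :=
  (LinearMap.mulLeft k ((1 : A) ⊗ₜ[k] a)).comp Δ -
    (flipT k A).comp ((LinearMap.mulLeft k ((1 : A) ⊗ₜ[k] a)).comp Δ)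

/-- `ζ^b = x ↦ Δ(x)(b ⊗ 1) − τ(Δ(x)(b ⊗ 1))` as a linear map. -/
noncomputable def underCobracketL (Δ : A →ₗ[k] A ⊗[k] A) (b : A) : A →ₗ[k] A ⊗[k] A :=
  (LinearMap.mulRight k (b ⊗ₜ[k] (1 : A))).comp Δ -
    (flipT k A).comp ((LinearMap.mulRight k (b ⊗ₜ[k] (1 : A))).comp Δ)

/-- The component `B̲(a)(x ⊗ y)` of the bibalanceator. -/
noncomputable def underBal (Δ : A →ₗ[k] A ⊗[k] A) (a x y : A) : A ⊗[k] A :=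
  (x ⊗ₜ[k] (1 : A)) * flipT k A (Δ y) * ((1 : A) ⊗ₜ[k] a) -
    flipT k A (Δ y) * ((1 : A) ⊗ₜ[k] (a * x)) +
    ((1 : A) ⊗ₜ[k] y) * Δ x * (a ⊗ₜ[k] (1 : A)) -
    Δ x * ((a * y) ⊗ₜ[k] (1 : A))

/-- The component `B̄(a)(x ⊗ y)` of the bibalanceator. -/
noncomputable def overBal (Δ : A →ₗ[k] A ⊗[k] A) (a x y : A) : A ⊗[k] A :=
  ((x * a) ⊗ₜ[k] (1 : A)) * flipT k A (Δ y) -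
    (a ⊗ₜ[k] (1 : A)) * flipT k A (Δ y) * ((1 : A) ⊗ₜ[k] x) +
    ((1 : A) ⊗ₜ[k] (y * a)) * Δ x -
    ((1 : A) ⊗ₜ[k] a) * Δ x * (y ⊗ₜ[k] (1 : A))

/-- Auxiliary permutation `u ⊗ (v ⊗ w) ↦ v ⊗ (u ⊗ w)`. -/
noncomputable def auxP (k : Type*) [Field k] (A : Type*) [Ring A] [Algebra k A] :
    A ⊗[k] (A ⊗[k] A) →ₗ[k] A ⊗[k] (A ⊗[k] A) :=
  (TensorProduct.assoc k A A A).toLinearMap.comp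
    ((TensorProduct.map (flipT k A) LinearMap.id).comp
      (TensorProduct.assoc k A A A).symm.toLinearMap)

/-- `u ⊗ (v ⊗ w) ↦ (u*b) ⊗ (v ⊗ (a*w))`. -/
noncomputable def auxF1 {k : Type*} [Field k] {A : Type*} [Ring A] [Algebra k A]
    (a b : A) : A ⊗[k] (A ⊗[k] A) →ₗ[k] A ⊗[k] (A ⊗[k] A) :=
  TensorProduct.map (LinearMap.mulRight k b)
    (TensorProduct.map LinearMap.id (LinearMap.mulLeft k a))

noncomputable def auxF {k : Type*} [Field k] {A : Type*} [Ring A] [Algebra k A]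
    (a b : A) : A ⊗[k] (A ⊗[k] A) →ₗ[k] A ⊗[k] (A ⊗[k] A) :=
  auxF1 a b - (auxP k A).comp (auxF1 a b)

noncomputable def auxG {k : Type*} [Field k] {A : Type*} [Ring A] [Algebra k A]
    (a b : A) : A ⊗[k] (A ⊗[k] A) →ₗ[k] A ⊗[k] (A ⊗[k] A) :=
  ((cycT k A).comp (cycT k A)).comp (auxF1 a b) -
    (cycT k A).comp ((auxP k A).comp (auxF1 a b))

lemma auxP_tmul (u v w : A) :
    auxP k A (u ⊗ₜ[k] (v ⊗ₜ[k] w)) = v ⊗ₜ[k] (u ⊗ₜ[k] w) := by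
  simp [auxP, flipT]

lemma cycT_tmul (u v w : A) :
    cycT k A (u ⊗ₜ[k] (v ⊗ₜ[k] w)) = w ⊗ₜ[k] (u ⊗ₜ[k] v) := by
  simp [cycT]

lemma auxF1_tmul (a b u v w : A) :
    auxF1 a b (u ⊗ₜ[k] (v ⊗ₜ[k] w)) = (u * b) ⊗ₜ[k] (v ⊗ₜ[k] (a * w)) := by
  simp [auxF1]

lemma cyclicSum_F_eq_G (a b : A) :
    (cyclicSum k A).comp (auxF a b) = (cyclicSum k A).comp (auxG a b) := by
  apply TensorProduct.ext'
  intro u vw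
  induction vw using TensorProduct.induction_on with
  | zero => simp
  | tmul v w =>
      simp only [LinearMap.comp_apply, auxF, auxG, LinearMap.sub_apply,
        LinearMap.comp_apply, auxF1_tmul, auxP_tmul, cycT_tmul, map_sub,
        cyclicSum, LinearMap.add_apply, LinearMap.id_apply]
      abel
  | add p q hp hq => simp only [TensorProduct.tmul_add, map_add, hp, hq]

lemma lemC1 (Δ : A →ₗ[k] A ⊗[k] A) (a b : A) :
    (applyFirst (underCobracketL Δ b)).comp
        (LinearMap.mulLeft k ((1 : A) ⊗ₜ[k] a)) =
      (auxF a b).comp (applyFirst Δ) := by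
  apply TensorProduct.ext'
  intro x₁ x₂
  simp only [LinearMap.comp_apply, LinearMap.mulLeft_apply,
    Algebra.TensorProduct.tmul_mul_tmul, one_mul, applyFirst,
    underCobracketL, LinearMap.sub_apply, TensorProduct.map_tmul,
    LinearMap.id_apply, LinearMap.mulRight_apply]
  generalize Δ x₁ = p
  induction p using TensorProduct.induction_on with
  | zero =>
      simp only [zero_mul, map_zero, sub_zero, TensorProduct.zero_tmul]
  | tmul y z =>
      simp only [Algebra.TensorProduct.tmul_mul_tmul, mul_one, flipT,
        LinearEquiv.coe_coe, TensorProduct.comm_tmul,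
        TensorProduct.sub_tmul, map_sub, TensorProduct.assoc_tmul,
        auxF, LinearMap.sub_apply, LinearMap.comp_apply, auxF1_tmul, auxP_tmul]
  | add p q hp hq =>
      simp only [add_mul, map_add, TensorProduct.add_tmul,
        TensorProduct.sub_tmul, map_sub] at hp hq ⊢
      rw [← hp, ← hq]; abel

lemma lemC2 (Δ : A →ₗ[k] A ⊗[k] A) (a b : A) :
    (applyFirst (overCobracketL Δ a)).comp
        ((flipT k A).comp (LinearMap.mulRight k (b ⊗ₜ[k] (1 : A)))) =
      (auxG a b).comp (TensorProduct.map LinearMap.id Δ) := by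
  apply TensorProduct.ext'
  intro x₁ x₂
  simp only [LinearMap.comp_apply, LinearMap.mulRight_apply,
    Algebra.TensorProduct.tmul_mul_tmul, mul_one, flipT, LinearEquiv.coe_coe,
    TensorProduct.comm_tmul, applyFirst, overCobracketL, LinearMap.sub_apply,
    TensorProduct.map_tmul, LinearMap.id_apply, LinearMap.mulLeft_apply]
  generalize Δ x₂ = p
  induction p using TensorProduct.induction_on with
  | zero => simp [auxG]
  | tmul v w =>
      simp only [Algebra.TensorProduct.tmul_mul_tmul, one_mul,
        TensorProduct.comm_tmul, TensorProduct.sub_tmul, map_sub,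
        TensorProduct.assoc_tmul, auxG, LinearMap.sub_apply,
        LinearMap.comp_apply, auxF1_tmul, auxP_tmul, cycT_tmul]
  | add p q hp hq =>
      simp only [mul_add, map_add, TensorProduct.add_tmul, TensorProduct.tmul_add,
        TensorProduct.sub_tmul, map_sub] at hp hq ⊢
      rw [← hp, ← hq]; abel

/-- for an infinitesimal bialgebra with symmetric bibalanceator, with
`T₁(u ⊗ v) = (1 ⊗ u)Δ(v)` and `T₂(u ⊗ v) = Δ(u)(v ⊗ 1)`, the generalized coJacobi
identity `(Id+σ+σ²)(ζ^b ⊗ Id)(T₁(a⊗x)) = (Id+σ+σ²)(δ_a ⊗ Id)(τ(T₂(x⊗b)))` holds. -/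
theorem generalized_coJacobi_of_symmetric_bibalanceator
    (Δ : A →ₗ[k] A ⊗[k] A)
    (hcoassoc :
      (TensorProduct.assoc k A A A).toLinearMap.comp
          ((TensorProduct.map Δ LinearMap.id).comp Δ) =
        (TensorProduct.map LinearMap.id Δ).comp Δ)
    (hder : ∀ x y : A,
      Δ (x * y) = (x ⊗ₜ[k] (1 : A)) * Δ y + Δ x * ((1 : A) ⊗ₜ[k] y))
    (hsym : ∀ a x y : A,
      underBal Δ a x y = underBal Δ a y x ∧ overBal Δ a x y = overBal Δ a y x)
    (a b x : A) :
    cyclicSum k A (applyFirst (underCobracketL Δ b) (((1 : A) ⊗ₜ[k] a) * Δ x)) =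
      cyclicSum k A
        (applyFirst (overCobracketL Δ a) (flipT k A (Δ x * (b ⊗ₜ[k] (1 : A))))) := by
  have h1 : applyFirst (underCobracketL Δ b) (((1 : A) ⊗ₜ[k] a) * Δ x) =
      auxF a b (applyFirst Δ (Δ x)) := by
    have := LinearMap.congr_fun (lemC1 Δ a b) (Δ x)
    simpa using this
  have h2 : applyFirst (overCobracketL Δ a) (flipT k A (Δ x * (b ⊗ₜ[k] (1 : A)))) =
      auxG a b (TensorProduct.map LinearMap.id Δ (Δ x)) := by
    have := LinearMap.congr_fun (lemC2 Δ a b) (Δ x)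
    simpa using this
  have h3 : applyFirst Δ (Δ x) = TensorProduct.map LinearMap.id Δ (Δ x) :=
    LinearMap.congr_fun hcoassoc x
  rw [h1, h2, h3]
  exact LinearMap.congr_fun (cyclicSum_F_eq_G a b) _
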